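/- arXiv:math/0511553 — 2 statements merged into one kernel-verified Lean document; each statement's English description precedes it below -/
import Mathlib

section
/- The bracket [u,v] = Σ_{p∈I} x^{σ_p}·(∂_p(u)·∂_{p̄}(v) − ∂_{p̄}(u)·∂_p(v)) + (2−∂)(u)·∂₀(v) − ∂₀(u)·(2−∂)(v) on 𝒜 is skew-symmetric and satisfies the Jacobi identity; hence (𝒜, [·,·]) is a Lie algebra over F (the contact Lie algebra 𝒦 = 𝒦(ℓ⃗,σ,Γ,𝒥) in normalized form). -/
/-!
Transport the bracket along `CA ≃ F[Γ × 𝒥]` to the monoid algebra. There the `∂_p` are pairwise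
commuting derivations, `∂` is the derivation multiplying `x^{α,i⃗}` by its weight
`Σ_{J_{1,3} ∪ I_{4,5}} α_r + Σ_{I₆ ∪ Ī_{4,6}} i_r`, each `∂_p` lowers this weight by
`ε_p = [p ∈ I₆ ∪ Ī_{4,6}]` (on the `∂*_p` part because `α_p = 0` whenever `ε_p = 1`), and every
`x^{σ_p}` is a joint eigenvector of the `∂_q` and of `∂`, because
`σ_p = (ε_p - 1) 1_{[p]} + (ε_{p̄} - 1) 1_{[p̄]}`.

For any such data the Leibniz rule expands `[[u,v],z]` into a double sum
`Σ_{q,p} x^{σ_q} x^{σ_p} (…)`, a single sum `Σ_q x^{σ_q} (…)` and a term free of the `x^{σ_p}`.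
After cyclic summation the summand of the double sum is antisymmetric in `(q, p)` and vanishes for
`q = p` (the Jacobi identity of a Poisson bracket with constant coefficients), and the summands of
the other two parts vanish identically.
-/

noncomputable section

/-- `ι_i = ℓ₁ + ⋯ + ℓ_i`. -/
def iot (ℓ : ℕ → ℕ) (i : ℕ) : ℕ := ∑ k ∈ Finset.Icc 1 i, ℓ k

/-- `I_{i,j} = {ι_{i-1}+1, …, ι_j}`. -/
def iSet (ℓ : ℕ → ℕ) (i j : ℕ) : Finset ℕ := Finset.Icc (iot ℓ (i - 1) + 1) (iot ℓ j)

/-- The index-shift map `p ↦ p̄` (shift by `ι₆`). -/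
def bar (ℓ : ℕ → ℕ) (p : ℕ) : ℕ := if p ≤ iot ℓ 6 then p + iot ℓ 6 else p - iot ℓ 6

/-- `K̄ = {p̄ : p ∈ K}`. -/
def barSet (ℓ : ℕ → ℕ) (K : Finset ℕ) : Finset ℕ := K.image (bar ℓ)

/-- `J_{i,j} = I_{i,j} ∪ Ī_{i,j}`. -/
def jSet (ℓ : ℕ → ℕ) (i j : ℕ) : Finset ℕ := iSet ℓ i j ∪ barSet ℓ (iSet ℓ i j)

/-- The semigroup `𝒥 = 𝒥₀ × 𝒥₁`, encoded as functions `ℕ → ℕ`; `j0 = true`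
means `𝒥₀ = ℕ` and `j0 = false` means `𝒥₀ = {0}`. -/
def jIdx (ℓ : ℕ → ℕ) (j0 : Bool) : Set (ℕ → ℕ) :=
  {i | (j0 = false → i 0 = 0) ∧
    ∀ p, 1 ≤ p →
      (p ∈ iSet ℓ 1 2 ∪ iSet ℓ 4 4 ∪ barSet ℓ (iSet ℓ 1 1) ∨ 2 * iot ℓ 6 < p) → i p = 0}

/-- `σ_p` (with `σ_p = σ_{p̄}`). -/
def sgm (F : Type*) [Field F] (ℓ : ℕ → ℕ) (p : ℕ) : ℕ → F :=
  let q := if p ≤ iot ℓ 6 then p else p - iot ℓ 6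
  if q ∈ iSet ℓ 1 3 then -Pi.single q (1 : F) - Pi.single (q + iot ℓ 6) (1 : F)
  else if q ∈ iSet ℓ 4 5 then -Pi.single q (1 : F)
  else 0

/-- The underlying space `𝒜`: the free `F`-module with basis `Γ × 𝒥`. -/
abbrev CA (F : Type*) [Field F] (ℓ : ℕ → ℕ) (Γ : AddSubgroup (ℕ → F)) (j0 : Bool) : Type _ :=
  (↥Γ × ↥(jIdx ℓ j0)) →₀ F

/-- The basis monomial `x^{α,i⃗}`, with the convention that it is `0` if `(α,i⃗) ∉ Γ × 𝒥`. -/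
def X (F : Type*) [Field F] (ℓ : ℕ → ℕ) (Γ : AddSubgroup (ℕ → F)) (j0 : Bool)
    (α : ℕ → F) (i : ℕ → ℕ) : CA F ℓ Γ j0 :=
  @dite _ (α ∈ Γ ∧ i ∈ jIdx ℓ j0) (Classical.dec _)
    (fun h => Finsupp.single (⟨α, h.1⟩, ⟨i, h.2⟩) 1) (fun _ => 0)

variable (F : Type*) [Field F] (ℓ : ℕ → ℕ) (Γ : AddSubgroup (ℕ → F)) (j0 : Bool)

/-- The commutative associative product on `𝒜`. -/
def mulA (u v : CA F ℓ Γ j0) : CA F ℓ Γ j0 :=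
  u.sum fun a ca => v.sum fun b cb =>
    (ca * cb) • X F ℓ Γ j0 (a.1.1 + b.1.1) (a.2.1 + b.2.1)

/-- The grading operator `∂*_p`. -/
def pstar (p : ℕ) (u : CA F ℓ Γ j0) : CA F ℓ Γ j0 :=
  u.sum fun a ca => (ca * a.1.1 p) • Finsupp.single a 1

/-- The down-grading operator `∂_{t_p}`. -/
def pt (p : ℕ) (u : CA F ℓ Γ j0) : CA F ℓ Γ j0 :=
  u.sum fun a ca => (ca * (a.2.1 p : F)) • X F ℓ Γ j0 a.1.1 (a.2.1 - Pi.single p 1)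

/-- `∂_p = ∂*_p + ∂_{t_p}`. -/
def dd (p : ℕ) (u : CA F ℓ Γ j0) : CA F ℓ Γ j0 := pstar F ℓ Γ j0 p u + pt F ℓ Γ j0 p u

/-- `∂ = Σ_{p∈J_{1,3}∪I_{4,5}} ∂*_p + Σ_{p∈I₆∪Ī_{4,6}} t_p ∂_{t_p}`. -/
def Dop (u : CA F ℓ Γ j0) : CA F ℓ Γ j0 :=
  (∑ p ∈ jSet ℓ 1 3 ∪ iSet ℓ 4 5, pstar F ℓ Γ j0 p u) +
    ∑ p ∈ iSet ℓ 6 6 ∪ barSet ℓ (iSet ℓ 4 6),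
      mulA F ℓ Γ j0 (X F ℓ Γ j0 0 (Pi.single p 1)) (pt F ℓ Γ j0 p u)

/-- The contact bracket (2.18):
`[u,v] = Σ_{p∈I} x^{σ_p}(∂_p u·∂_{p̄} v − ∂_{p̄} u·∂_p v) + (2−∂)(u)·∂₀(v) − ∂₀(u)·(2−∂)(v)`. -/
def brk (u v : CA F ℓ Γ j0) : CA F ℓ Γ j0 :=
  (∑ p ∈ iSet ℓ 1 6,
      mulA F ℓ Γ j0 (X F ℓ Γ j0 (sgm F ℓ p) 0)
        (mulA F ℓ Γ j0 (dd F ℓ Γ j0 p u) (dd F ℓ Γ j0 (bar ℓ p) v) -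
          mulA F ℓ Γ j0 (dd F ℓ Γ j0 (bar ℓ p) u) (dd F ℓ Γ j0 p v))) +
    mulA F ℓ Γ j0 ((2 : F) • u - Dop F ℓ Γ j0 u) (dd F ℓ Γ j0 0 v) -
    mulA F ℓ Γ j0 (dd F ℓ Γ j0 0 u) ((2 : F) • v - Dop F ℓ Γ j0 v)

theorem Finset.sum_sum_eq_zero_of_antisymm {κ M : Type*} [AddCommMonoid M] (s : Finset κ)
    (f : κ → κ → M) (h : ∀ p ∈ s, ∀ q ∈ s, f p q + f q p = 0) (hdiag : ∀ p ∈ s, f p p = 0) :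
    ∑ p ∈ s, ∑ q ∈ s, f p q = 0 := by
  rw [← Finset.sum_product']
  refine Finset.sum_involution (fun x _ => x.swap) (fun x hx => ?_) (fun x hx hne hswap => ?_)
    (fun x hx => Finset.mem_product.2 (Finset.mem_product.1 hx).symm) (fun x _ => x.swap_swap)
  · obtain ⟨hp, hq⟩ := Finset.mem_product.1 hx
    exact h x.1 hp x.2 hq
  · obtain ⟨hp, -⟩ := Finset.mem_product.1 hx
    have hx12 : x.2 = x.1 := congrArg Prod.fst hswap
    exact hne (by rw [hx12]; exact hdiag x.1 hp)

/-- Abstract data of a contact bracket: commuting derivations `d i`, a derivation `D` which `d i`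
lowers by `ε i`, index pairs `(a p, b p)` for `p ∈ S` with coefficients `w p` that are joint
eigenvectors, and a Reeb index `o`. For `𝒦` these are `∂_i`, `∂`, `(p, p̄)`, `x^{σ_p}` and `0`. -/
structure ContactData (K A ι κ : Type*) [CommRing K] [CommRing A] [Algebra K A]
    [DecidableEq κ] where
  d : ι → Derivation K A A
  D : Derivation K A A
  ε : ι → K
  S : Finset κ
  a : κ → ι
  b : κ → ι
  o : ι
  w : κ → A
  d_comm : ∀ i j u, d i (d j u) = d j (d i u)
  D_d : ∀ i u, D (d i u) = d i (D u) - ε i • d i u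
  ε_o : ε o = 0
  d_a_w : ∀ p ∈ S, ∀ q ∈ S, d (a q) (w p) = (if q = p then ε (a p) - 1 else 0) • w p
  d_b_w : ∀ p ∈ S, ∀ q ∈ S, d (b q) (w p) = (if q = p then ε (b p) - 1 else 0) • w p
  d_o_w : ∀ p ∈ S, d o (w p) = 0
  D_w : ∀ p ∈ S, D (w p) = (ε (a p) + ε (b p) - 2) • w p

namespace ContactData

variable {K A ι κ : Type*} [CommRing K] [CommRing A] [Algebra K A] [DecidableEq κ]
  (C : ContactData K A ι κ)

def pair (p : κ) (u v : A) : A := C.d (C.a p) u * C.d (C.b p) v - C.d (C.b p) u * C.d (C.a p) v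

def poisson (u v : A) : A := ∑ p ∈ C.S, C.w p * C.pair p u v

def twoSubD (u : A) : A := 2 * u - C.D u

def reeb (u v : A) : A := C.twoSubD u * C.d C.o v - C.d C.o u * C.twoSubD v

def bracket (u v : A) : A := C.poisson u v + C.reeb u v

lemma bracket_swap (u v : A) : C.bracket u v = -C.bracket v u := by
  have h : ∀ p, C.pair p u v = -C.pair p v u := fun p => by unfold pair; ring
  simp only [bracket, poisson, reeb, h, mul_neg, Finset.sum_neg_distrib]
  ring

lemma d_pair (i : ι) (p : κ) (u v : A) :
    C.d i (C.pair p u v) = C.pair p (C.d i u) v + C.pair p u (C.d i v) := by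
  simp only [pair, map_sub, Derivation.leibniz, smul_eq_mul, C.d_comm i]
  ring

lemma D_pair (p : κ) (u v : A) :
    C.D (C.pair p u v) =
      C.pair p (C.D u) v + C.pair p u (C.D v) - (C.ε (C.a p) + C.ε (C.b p)) • C.pair p u v := by
  simp only [pair, map_sub, Derivation.leibniz, smul_eq_mul, C.D_d, Algebra.smul_def, map_add]
  ring

lemma d_twoSubD (i : ι) (u : A) :
    C.d i (C.twoSubD u) = C.twoSubD (C.d i u) - C.ε i • C.d i u := by
  simp only [twoSubD, two_mul, map_sub, map_add, C.D_d]
  abel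

lemma D_twoSubD (u : A) : C.D (C.twoSubD u) = C.twoSubD (C.D u) := by
  simp only [twoSubD, two_mul, map_sub, map_add]

lemma d_o_D (u : A) : C.d C.o (C.D u) = C.D (C.d C.o u) := by
  rw [C.D_d, C.ε_o, zero_smul, sub_zero]

lemma d_poisson (i : ι) (c : κ → K) (hw : ∀ p ∈ C.S, C.d i (C.w p) = c p • C.w p) (u v : A) :
    C.d i (C.poisson u v) = C.poisson (C.d i u) v + C.poisson u (C.d i v) +
      ∑ p ∈ C.S, c p • (C.w p * C.pair p u v) := by
  simp only [poisson, map_sum, ← Finset.sum_add_distrib]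
  refine Finset.sum_congr rfl fun p hp => ?_
  rw [Derivation.leibniz, hw p hp, C.d_pair, smul_eq_mul, smul_eq_mul, mul_smul_comm,
    mul_comm (C.pair p u v)]
  ring

lemma D_poisson (u v : A) :
    C.D (C.poisson u v) = C.poisson (C.D u) v + C.poisson u (C.D v) - 2 * C.poisson u v := by
  simp only [poisson, map_sum, Finset.mul_sum, ← Finset.sum_add_distrib, ← Finset.sum_sub_distrib]
  refine Finset.sum_congr rfl fun p hp => ?_
  rw [Derivation.leibniz, C.D_w p hp, C.D_pair, smul_eq_mul, smul_eq_mul]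
  simp only [Algebra.smul_def, map_sub, map_add, map_ofNat]
  ring

def reebDefect (i : ι) (u v : A) : A := C.d i u * C.d C.o v - C.d C.o u * C.d i v

lemma d_reeb (i : ι) (u v : A) :
    C.d i (C.reeb u v) =
      C.reeb (C.d i u) v + C.reeb u (C.d i v) - C.ε i • C.reebDefect i u v := by
  simp only [reeb, reebDefect, map_sub, Derivation.leibniz, smul_eq_mul, C.d_twoSubD,
    C.d_comm i C.o, Algebra.smul_def]
  ring

lemma D_reeb (u v : A) : C.D (C.reeb u v) = C.reeb (C.D u) v + C.reeb u (C.D v) := by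
  simp only [reeb, map_sub, Derivation.leibniz, smul_eq_mul, C.D_twoSubD, C.d_o_D]
  ring

lemma d_bracket (i : ι) (c : κ → K) (hw : ∀ p ∈ C.S, C.d i (C.w p) = c p • C.w p) (u v : A) :
    C.d i (C.bracket u v) = C.bracket (C.d i u) v + C.bracket u (C.d i v) +
      (∑ p ∈ C.S, c p • (C.w p * C.pair p u v)) - C.ε i • C.reebDefect i u v := by
  rw [bracket, map_add, C.d_poisson i c hw, C.d_reeb, bracket, bracket]
  abel

lemma d_a_bracket {q : κ} (hq : q ∈ C.S) (u v : A) :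
    C.d (C.a q) (C.bracket u v) = C.bracket (C.d (C.a q) u) v + C.bracket u (C.d (C.a q) v) +
      (C.ε (C.a q) - 1) • (C.w q * C.pair q u v) - C.ε (C.a q) • C.reebDefect (C.a q) u v := by
  rw [C.d_bracket _ _ fun p hp => C.d_a_w p hp q hq]
  simp only [ite_smul, zero_smul, Finset.sum_ite_eq, if_pos hq]

lemma d_b_bracket {q : κ} (hq : q ∈ C.S) (u v : A) :
    C.d (C.b q) (C.bracket u v) = C.bracket (C.d (C.b q) u) v + C.bracket u (C.d (C.b q) v) +
      (C.ε (C.b q) - 1) • (C.w q * C.pair q u v) - C.ε (C.b q) • C.reebDefect (C.b q) u v := by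
  rw [C.d_bracket _ _ fun p hp => C.d_b_w p hp q hq]
  simp only [ite_smul, zero_smul, Finset.sum_ite_eq, if_pos hq]

lemma d_o_bracket (u v : A) :
    C.d C.o (C.bracket u v) = C.bracket (C.d C.o u) v + C.bracket u (C.d C.o v) := by
  rw [C.d_bracket _ (fun _ => 0) fun p hp => by rw [C.d_o_w p hp, zero_smul]]
  simp only [zero_smul, Finset.sum_const_zero, C.ε_o, add_zero, sub_zero]

lemma D_bracket (u v : A) :
    C.D (C.bracket u v) = C.bracket (C.D u) v + C.bracket u (C.D v) - 2 * C.poisson u v := by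
  rw [bracket, map_add, C.D_poisson, C.D_reeb, bracket, bracket]
  abel

def crossTerm (q p : κ) (u v z : A) : A :=
  (C.pair p (C.d (C.a q) u) v + C.pair p u (C.d (C.a q) v)) * C.d (C.b q) z -
    (C.pair p (C.d (C.b q) u) v + C.pair p u (C.d (C.b q) v)) * C.d (C.a q) z

def diagPoisson (q : κ) (u v z : A) : A :=
  (C.reeb (C.d (C.a q) u) v + C.reeb u (C.d (C.a q) v) +
      (C.ε (C.a q) - 1) • (C.w q * C.pair q u v) - C.ε (C.a q) • C.reebDefect (C.a q) u v) *
      C.d (C.b q) z -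
    (C.reeb (C.d (C.b q) u) v + C.reeb u (C.d (C.b q) v) +
      (C.ε (C.b q) - 1) • (C.w q * C.pair q u v) - C.ε (C.b q) • C.reebDefect (C.b q) u v) *
      C.d (C.a q) z

def diagReeb (q : κ) (u v z : A) : A :=
  (4 * C.pair q u v - C.pair q (C.D u) v - C.pair q u (C.D v)) * C.d C.o z -
    (C.pair q (C.d C.o u) v + C.pair q u (C.d C.o v)) * C.twoSubD z

def reebTerm (u v z : A) : A :=
  (2 * C.reeb u v - C.reeb (C.D u) v - C.reeb u (C.D v)) * C.d C.o z -
    (C.reeb (C.d C.o u) v + C.reeb u (C.d C.o v)) * C.twoSubD z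

lemma sum_w_mul_crossTerm (q : κ) (u v z : A) :
    ∑ p ∈ C.S, C.w p * C.crossTerm q p u v z =
      (C.poisson (C.d (C.a q) u) v + C.poisson u (C.d (C.a q) v)) * C.d (C.b q) z -
        (C.poisson (C.d (C.b q) u) v + C.poisson u (C.d (C.b q) v)) * C.d (C.a q) z := by
  simp only [poisson, add_mul, Finset.sum_mul, ← Finset.sum_add_distrib, ← Finset.sum_sub_distrib]
  exact Finset.sum_congr rfl fun p _ => by unfold crossTerm; ring

lemma sum_w_mul_diagReeb (u v z : A) :
    ∑ q ∈ C.S, C.w q * C.diagReeb q u v z =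
      (4 * C.poisson u v - C.poisson (C.D u) v - C.poisson u (C.D v)) * C.d C.o z -
        (C.poisson (C.d C.o u) v + C.poisson u (C.d C.o v)) * C.twoSubD z := by
  simp only [poisson, add_mul, sub_mul, Finset.mul_sum, Finset.sum_mul, ← Finset.sum_add_distrib,
    ← Finset.sum_sub_distrib]
  exact Finset.sum_congr rfl fun p _ => by unfold diagReeb; ring

lemma poisson_bracket_left (u v z : A) :
    C.poisson (C.bracket u v) z =
      ∑ q ∈ C.S, ∑ p ∈ C.S, C.w q * (C.w p * C.crossTerm q p u v z) +
        ∑ q ∈ C.S, C.w q * C.diagPoisson q u v z := by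
  rw [poisson, ← Finset.sum_add_distrib]
  refine Finset.sum_congr rfl fun q hq => ?_
  rw [← Finset.mul_sum, sum_w_mul_crossTerm, pair, C.d_a_bracket hq, C.d_b_bracket hq,
    diagPoisson]
  simp only [bracket]
  ring

lemma reeb_bracket_left (u v z : A) :
    C.reeb (C.bracket u v) z = ∑ q ∈ C.S, C.w q * C.diagReeb q u v z + C.reebTerm u v z := by
  rw [sum_w_mul_diagReeb, reeb, twoSubD, C.D_bracket, C.d_o_bracket, reebTerm]
  simp only [bracket]
  ring

lemma bracket_bracket (u v z : A) :
    C.bracket (C.bracket u v) z =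
      ∑ q ∈ C.S, ∑ p ∈ C.S, C.w q * (C.w p * C.crossTerm q p u v z) +
        (∑ q ∈ C.S, C.w q * C.diagPoisson q u v z + ∑ q ∈ C.S, C.w q * C.diagReeb q u v z) +
        C.reebTerm u v z := by
  show C.poisson (C.bracket u v) z + C.reeb (C.bracket u v) z = _
  rw [poisson_bracket_left, reeb_bracket_left]
  abel

lemma crossTerm_cyclic_add_swap (q p : κ) (u v z : A) :
    (C.crossTerm q p u v z + C.crossTerm q p v z u + C.crossTerm q p z u v) +
      (C.crossTerm p q u v z + C.crossTerm p q v z u + C.crossTerm p q z u v) = 0 := by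
  simp only [crossTerm, pair, C.d_comm (C.a p) (C.a q), C.d_comm (C.a p) (C.b q),
    C.d_comm (C.b p) (C.a q), C.d_comm (C.b p) (C.b q)]
  ring

lemma crossTerm_cyclic_self (q : κ) (u v z : A) :
    C.crossTerm q q u v z + C.crossTerm q q v z u + C.crossTerm q q z u v = 0 := by
  simp only [crossTerm, pair, C.d_comm (C.b q) (C.a q)]
  ring

lemma diag_cyclic (q : κ) (u v z : A) :
    (C.diagPoisson q u v z + C.diagReeb q u v z) + (C.diagPoisson q v z u + C.diagReeb q v z u) +
      (C.diagPoisson q z u v + C.diagReeb q z u v) = 0 := by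
  simp only [diagPoisson, diagReeb, reeb, reebDefect, pair, twoSubD, C.D_d, C.d_comm (C.a q) C.o,
    C.d_comm (C.b q) C.o, Algebra.smul_def, map_sub, map_one]
  ring

lemma reebTerm_cyclic (u v z : A) :
    C.reebTerm u v z + C.reebTerm v z u + C.reebTerm z u v = 0 := by
  simp only [reebTerm, reeb, twoSubD, C.D_d, C.ε_o, zero_smul, sub_zero]
  ring

lemma bracket_jacobi (u v z : A) :
    C.bracket (C.bracket u v) z + C.bracket (C.bracket v z) u +
      C.bracket (C.bracket z u) v = 0 := by
  have hcross := Finset.sum_sum_eq_zero_of_antisymm C.S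
    (fun q p => C.w q * (C.w p * (C.crossTerm q p u v z + C.crossTerm q p v z u +
      C.crossTerm q p z u v)))
    (fun q _ p _ => by linear_combination C.w q * C.w p * C.crossTerm_cyclic_add_swap q p u v z)
    (fun q _ => by linear_combination C.w q * C.w q * C.crossTerm_cyclic_self q u v z)
  have hdiag : ∑ q ∈ C.S, C.w q * ((C.diagPoisson q u v z + C.diagReeb q u v z) +
      (C.diagPoisson q v z u + C.diagReeb q v z u) +
        (C.diagPoisson q z u v + C.diagReeb q z u v)) = 0 :=
    Finset.sum_eq_zero fun q _ => by rw [C.diag_cyclic, mul_zero]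
  simp only [mul_add, Finset.sum_add_distrib] at hcross hdiag
  rw [bracket_bracket, bracket_bracket, bracket_bracket]
  linear_combination hcross + hdiag + C.reebTerm_cyclic u v z

end ContactData

namespace AddMonoidAlgebra

variable {R M : Type*} [CommRing R]

def monomialMap (f : M → M) (g : M → R) : AddMonoidAlgebra R M →ₗ[R] AddMonoidAlgebra R M :=
  Finsupp.linearCombination R (fun m => single (f m) (g m)) ∘ₗ (coeffLinearEquiv R).toLinearMap

variable {f f' : M → M} {g g' : M → R}

@[simp]
lemma monomialMap_single (m : M) (c : R) :
    monomialMap f g (single m c) = single (f m) (c * g m) := by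
  simp [monomialMap, coeffLinearEquiv]

lemma monomialMap_ofCoeff (u : M →₀ R) :
    monomialMap f g (ofCoeff u) = u.sum fun m c => single (f m) (c * g m) := by
  simp [monomialMap, coeffLinearEquiv, Finsupp.linearCombination_apply]

lemma monomialMap_add (x : AddMonoidAlgebra R M) :
    monomialMap f (g + g') x = monomialMap f g x + monomialMap f g' x := by
  induction x using induction_linear with
  | zero => simp
  | add x y hx hy => simp only [map_add, hx, hy]; abel
  | single m c => simp only [monomialMap_single, Pi.add_apply, mul_add, single_add]

lemma monomialMap_finsetSum {ι : Type*} (s : Finset ι) (g : ι → M → R)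
    (x : AddMonoidAlgebra R M) :
    monomialMap f (∑ i ∈ s, g i) x = ∑ i ∈ s, monomialMap f (g i) x := by
  induction x using induction_linear with
  | zero => simp
  | add x y hx hy => simp only [map_add, hx, hy, Finset.sum_add_distrib]
  | single m c =>
    simp only [monomialMap_single, Finset.sum_apply, Finset.mul_sum]
    exact map_sum (singleAddHom (f m)) _ s

lemma monomialMap_comm (hf : ∀ m, f (f' m) = f' (f m))
    (hg : ∀ m, g' m * g (f' m) = g m * g' (f m)) (x : AddMonoidAlgebra R M) :
    monomialMap f g (monomialMap f' g' x) = monomialMap f' g' (monomialMap f g x) := by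
  induction x using induction_linear with
  | zero => simp
  | add x y hx hy => simp only [map_add, hx, hy]
  | single m c => simp only [monomialMap_single, hf, mul_assoc, hg]

lemma monomialMap_comm_weight (χ : M → R) (c : R) (h : ∀ m, g m ≠ 0 → χ m = χ (f m) + c)
    (x : AddMonoidAlgebra R M) :
    monomialMap f g (monomialMap id χ x) =
      monomialMap id χ (monomialMap f g x) + c • monomialMap f g x := by
  induction x using induction_linear with
  | zero => simp
  | add x y hx hy => simp only [map_add, hx, hy, smul_add]; abel
  | single m a =>
    simp only [monomialMap_single, id, smul_single, smul_eq_mul, ← single_add]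
    congr 1
    by_cases hm : g m = 0
    · simp [hm]
    · rw [h m hm]; ring

variable [AddCommMonoid M]

lemma monomialMap_mul (hg : ∀ m m', g (m + m') = g m + g m')
    (hf : ∀ m m', g m ≠ 0 → f (m + m') = f m + m') (x y : AddMonoidAlgebra R M) :
    monomialMap f g (x * y) = x • monomialMap f g y + y • monomialMap f g x := by
  induction x using induction_linear with
  | zero => simp
  | add x x' hx hx' => simp only [add_mul, map_add, hx, hx', add_smul, smul_add]; abel
  | single m c =>
    induction y using induction_linear with
    | zero => simp
    | add y y' hy hy' => simp only [mul_add, map_add, hy, hy', add_smul, smul_add]; abel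
    | single m' c' =>
      have shift : ∀ n n' (a : R), single (f (n + n')) (a * g n) = single (f n + n') (a * g n) :=
        fun n n' a => by
          by_cases hn : g n = 0
          · simp [hn]
          · rw [hf n n' hn]
      simp only [single_mul_single, monomialMap_single, smul_eq_mul, hg, mul_add, single_add]
      rw [shift, add_comm m m', shift, add_comm, add_comm (f m') m, add_comm (f m) m']
      congr 2 <;> ring

def monomialDerivation (f : M → M) (g : M →+ R) (hf : ∀ m m', g m ≠ 0 → f (m + m') = f m + m') :
    Derivation R (AddMonoidAlgebra R M) (AddMonoidAlgebra R M) :=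
  Derivation.mk' (monomialMap f g) (monomialMap_mul (map_add g) hf)

def weightDerivation (χ : M →+ R) : Derivation R (AddMonoidAlgebra R M) (AddMonoidAlgebra R M) :=
  monomialDerivation id χ fun _ _ _ => rfl

end AddMonoidAlgebra

variable {F ℓ Γ j0}

lemma iot_zero : iot ℓ 0 = 0 := by simp [iot]

lemma iot_mono : Monotone (iot ℓ) := fun _ _ h =>
  Finset.sum_le_sum_of_subset (Finset.Icc_subset_Icc_right h)

lemma iot_chain : iot ℓ 1 ≤ iot ℓ 2 ∧ iot ℓ 2 ≤ iot ℓ 3 ∧ iot ℓ 3 ≤ iot ℓ 4 ∧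
    iot ℓ 4 ≤ iot ℓ 5 ∧ iot ℓ 5 ≤ iot ℓ 6 :=
  ⟨iot_mono (by norm_num), iot_mono (by norm_num), iot_mono (by norm_num),
    iot_mono (by norm_num), iot_mono (by norm_num)⟩

lemma mem_iSet {i j r : ℕ} : r ∈ iSet ℓ i j ↔ iot ℓ (i - 1) < r ∧ r ≤ iot ℓ j := by
  rw [iSet, Finset.mem_Icc, Nat.succ_le_iff]

lemma bar_of_le {p : ℕ} (hp : p ≤ iot ℓ 6) : bar ℓ p = p + iot ℓ 6 := if_pos hp

lemma mem_barSet_iSet {i j r : ℕ} (hj : j ≤ 6) :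
    r ∈ barSet ℓ (iSet ℓ i j) ↔ iot ℓ (i - 1) + iot ℓ 6 < r ∧ r ≤ iot ℓ j + iot ℓ 6 := by
  have hj6 := iot_mono (ℓ := ℓ) hj
  simp only [barSet, Finset.mem_image, mem_iSet]
  constructor
  · rintro ⟨p, hp, rfl⟩
    rw [bar_of_le (hp.2.trans hj6)]
    omega
  · intro hr
    exact ⟨r - iot ℓ 6, by omega, by rw [bar_of_le (by omega)]; omega⟩

/- In lemma names, `gradIdx` is `J_{1,3} ∪ I_{4,5}` (the `∂*_p` occurring in `∂`) and `eulerIdx`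
is `I₆ ∪ Ī_{4,6}` (the `t_p ∂_{t_p}` occurring in `∂`); `eps p` is the indicator of `eulerIdx`. -/

lemma mem_eulerIdx_iff_not_mem_gradIdx {r : ℕ} (h1 : 1 ≤ r) (h2 : r ≤ 2 * iot ℓ 6) :
    r ∈ iSet ℓ 6 6 ∪ barSet ℓ (iSet ℓ 4 6) ↔ r ∉ jSet ℓ 1 3 ∪ iSet ℓ 4 5 := by
  have := iot_chain (ℓ := ℓ)
  simp only [jSet, Finset.mem_union, mem_iSet, mem_barSet_iSet (show 6 ≤ 6 by norm_num),
    mem_barSet_iSet (show 3 ≤ 6 by norm_num), Nat.reduceSub, iot_zero]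
  omega

lemma zero_not_mem_eulerIdx : 0 ∉ iSet ℓ 6 6 ∪ barSet ℓ (iSet ℓ 4 6) := by
  simp [mem_iSet, mem_barSet_iSet]

variable (F ℓ) in
def eps (r : ℕ) : F := if r ∈ iSet ℓ 6 6 ∪ barSet ℓ (iSet ℓ 4 6) then 1 else 0

lemma eps_zero : eps F ℓ 0 = 0 := if_neg zero_not_mem_eulerIdx

lemma ite_mem_gradIdx_eps_sub_one {r : ℕ} (h1 : 1 ≤ r) (h2 : r ≤ 2 * iot ℓ 6) :
    (if r ∈ jSet ℓ 1 3 ∪ iSet ℓ 4 5 then eps F ℓ r - 1 else 0) = eps F ℓ r - 1 := by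
  split_ifs with h
  · rfl
  · rw [eps, if_pos ((mem_eulerIdx_iff_not_mem_gradIdx h1 h2).2 h), sub_self]

lemma sgm_eq {p : ℕ} (hp : p ∈ iSet ℓ 1 6) :
    sgm F ℓ p =
      (eps F ℓ p - 1) • Pi.single p 1 + (eps F ℓ (bar ℓ p) - 1) • Pi.single (bar ℓ p) 1 := by
  have := iot_chain (ℓ := ℓ)
  simp only [mem_iSet, Nat.reduceSub, iot_zero] at hp
  rw [sgm, bar_of_le hp.2, if_pos hp.2]
  simp only [eps, Finset.mem_union, mem_iSet, mem_barSet_iSet (show 6 ≤ 6 by norm_num),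
    Nat.reduceSub, iot_zero]
  split_ifs <;> first | omega | (ext r; simp [sub_eq_add_neg])

lemma sgm_apply_of_mem {p q : ℕ} (hp : p ∈ iSet ℓ 1 6) (hq : q ∈ iSet ℓ 1 6) :
    sgm F ℓ p q = if q = p then eps F ℓ p - 1 else 0 := by
  simp only [mem_iSet, Nat.reduceSub, iot_zero] at hp hq
  rw [sgm_eq (mem_iSet.2 hp), bar_of_le hp.2]
  simp [Pi.single_apply, show q ≠ p + iot ℓ 6 by omega]

lemma sgm_apply_bar {p q : ℕ} (hp : p ∈ iSet ℓ 1 6) (hq : q ∈ iSet ℓ 1 6) :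
    sgm F ℓ p (bar ℓ q) = if q = p then eps F ℓ (bar ℓ p) - 1 else 0 := by
  simp only [mem_iSet, Nat.reduceSub, iot_zero] at hp hq
  rw [sgm_eq (mem_iSet.2 hp), bar_of_le hp.2, bar_of_le hq.2]
  simp [Pi.single_apply, show q + iot ℓ 6 ≠ p by omega]

lemma sgm_apply_zero {p : ℕ} (hp : p ∈ iSet ℓ 1 6) : sgm F ℓ p 0 = 0 := by
  simp only [mem_iSet, Nat.reduceSub, iot_zero] at hp
  rw [sgm_eq (mem_iSet.2 hp), bar_of_le hp.2]
  simp [show 0 ≠ p by omega, show 0 ≠ p + iot ℓ 6 by omega]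

lemma sum_sgm {p : ℕ} (hp : p ∈ iSet ℓ 1 6) :
    ∑ r ∈ jSet ℓ 1 3 ∪ iSet ℓ 4 5, sgm F ℓ p r = eps F ℓ p + eps F ℓ (bar ℓ p) - 2 := by
  rw [sgm_eq hp]
  simp only [mem_iSet, Nat.reduceSub, iot_zero] at hp
  simp only [Pi.add_apply, Pi.smul_apply, Finset.sum_add_distrib, Pi.single_apply, smul_eq_mul,
    mul_ite, mul_one, mul_zero, Finset.sum_ite_eq', bar_of_le hp.2]
  rw [ite_mem_gradIdx_eps_sub_one (by omega) (by omega),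
    ite_mem_gradIdx_eps_sub_one (by omega) (by omega)]
  ring

lemma zero_mem_jIdx : (0 : ℕ → ℕ) ∈ jIdx ℓ j0 := ⟨fun _ => rfl, fun _ _ _ => rfl⟩

lemma add_mem_jIdx {i i' : ℕ → ℕ} (hi : i ∈ jIdx ℓ j0) (hi' : i' ∈ jIdx ℓ j0) :
    i + i' ∈ jIdx ℓ j0 :=
  ⟨fun h => by simp [hi.1 h, hi'.1 h], fun p h1 h2 => by simp [hi.2 p h1 h2, hi'.2 p h1 h2]⟩

lemma tsub_mem_jIdx {i : ℕ → ℕ} (hi : i ∈ jIdx ℓ j0) (i' : ℕ → ℕ) : i - i' ∈ jIdx ℓ j0 :=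
  ⟨fun h => by simp [hi.1 h], fun p h1 h2 => by simp [hi.2 p h1 h2]⟩

lemma single_mem_jIdx {p : ℕ} (hp : p ∈ iSet ℓ 6 6 ∪ barSet ℓ (iSet ℓ 4 6)) :
    (Pi.single p 1 : ℕ → ℕ) ∈ jIdx ℓ j0 := by
  have := iot_chain (ℓ := ℓ)
  simp only [Finset.mem_union, mem_iSet, mem_barSet_iSet (show 6 ≤ 6 by norm_num),
    Nat.reduceSub] at hp
  refine ⟨fun _ => Pi.single_eq_of_ne (by omega) _, fun r hr1 hr => Pi.single_eq_of_ne ?_ _⟩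
  simp only [Finset.mem_union, mem_iSet, mem_barSet_iSet (show 1 ≤ 6 by norm_num), Nat.reduceSub,
    iot_zero] at hr
  omega

variable (ℓ j0) in
def jIdxSubmonoid : AddSubmonoid (ℕ → ℕ) where
  carrier := jIdx ℓ j0
  zero_mem' := zero_mem_jIdx
  add_mem' := add_mem_jIdx

instance : AddCommMonoid (jIdx ℓ j0) := inferInstanceAs (AddCommMonoid (jIdxSubmonoid ℓ j0))

variable (ℓ Γ j0) in
abbrev BasisIdx : Type _ := ↥Γ × ↥(jIdx ℓ j0)

variable (F ℓ Γ j0) in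
abbrev CAlg : Type _ := AddMonoidAlgebra F (BasisIdx ℓ Γ j0)

open AddMonoidAlgebra

def lowerExp (p : ℕ) (m : BasisIdx ℓ Γ j0) : BasisIdx ℓ Γ j0 :=
  (m.1, ⟨m.2.1 - Pi.single p 1, tsub_mem_jIdx m.2.2 _⟩)

def gammaCoord (p : ℕ) : BasisIdx ℓ Γ j0 →+ F :=
  AddMonoidHom.mk' (fun m => (m.1 : ℕ → F) p) fun _ _ => rfl

def expCoord (p : ℕ) : BasisIdx ℓ Γ j0 →+ F :=
  AddMonoidHom.mk' (fun m => ((m.2 : ℕ → ℕ) p : F)) fun _ _ => Nat.cast_add _ _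

@[simp]
lemma gammaCoord_apply (p : ℕ) (m : BasisIdx ℓ Γ j0) : gammaCoord p m = (m.1 : ℕ → F) p := rfl

@[simp]
lemma expCoord_apply (p : ℕ) (m : BasisIdx ℓ Γ j0) : expCoord p m = ((m.2 : ℕ → ℕ) p : F) := rfl

lemma lowerExp_add {p : ℕ} {m : BasisIdx ℓ Γ j0} (h : expCoord p m ≠ 0) (m' : BasisIdx ℓ Γ j0) :
    lowerExp p (m + m') = lowerExp p m + m' := by
  have hm : (m.2 : ℕ → ℕ) p ≠ 0 := fun h' => h (by simp [h'])
  refine Prod.ext rfl (Subtype.ext (funext fun r => ?_))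
  show (m.2 : ℕ → ℕ) r + (m'.2 : ℕ → ℕ) r - (Pi.single p 1 : ℕ → ℕ) r =
    (m.2 : ℕ → ℕ) r - (Pi.single p 1 : ℕ → ℕ) r + (m'.2 : ℕ → ℕ) r
  rcases eq_or_ne r p with rfl | hr
  · rw [Pi.single_eq_same]; omega
  · rw [Pi.single_eq_of_ne hr]; omega

lemma lowerExp_comm (p q : ℕ) (m : BasisIdx ℓ Γ j0) :
    lowerExp p (lowerExp q m) = lowerExp q (lowerExp p m) :=
  Prod.ext rfl (Subtype.ext tsub_right_comm)

lemma gammaCoord_lowerExp (p r : ℕ) (m : BasisIdx ℓ Γ j0) :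
    gammaCoord r (lowerExp p m) = gammaCoord r m := rfl

lemma expCoord_lowerExp_of_ne {p q : ℕ} (m : BasisIdx ℓ Γ j0) (h : q ≠ p) :
    expCoord q (lowerExp p m) = expCoord q m := by
  simp [lowerExp, Pi.single_eq_of_ne h]

lemma expCoord_lowerExp {p : ℕ} {m : BasisIdx ℓ Γ j0} (hm : (m.2 : ℕ → ℕ) p ≠ 0) (r : ℕ) :
    expCoord r (lowerExp p m) = expCoord r m - (Pi.single p 1 : ℕ → F) r := by
  rcases eq_or_ne r p with rfl | hr
  · simp [lowerExp, Nat.cast_sub (Nat.one_le_iff_ne_zero.2 hm)]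
  · simp [expCoord_lowerExp_of_ne m hr, Pi.single_eq_of_ne hr]

variable (ℓ Γ j0) in
def degree : BasisIdx ℓ Γ j0 →+ F :=
  ∑ r ∈ jSet ℓ 1 3 ∪ iSet ℓ 4 5, gammaCoord r +
    ∑ r ∈ iSet ℓ 6 6 ∪ barSet ℓ (iSet ℓ 4 6), expCoord r

lemma degree_apply (m : BasisIdx ℓ Γ j0) :
    degree ℓ Γ j0 m = ∑ r ∈ jSet ℓ 1 3 ∪ iSet ℓ 4 5, (m.1 : ℕ → F) r +
      ∑ r ∈ iSet ℓ 6 6 ∪ barSet ℓ (iSet ℓ 4 6), ((m.2 : ℕ → ℕ) r : F) := by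
  simp [degree, AddMonoidHom.finsetSum_apply]

lemma degree_lowerExp {p : ℕ} {m : BasisIdx ℓ Γ j0} (hm : (m.2 : ℕ → ℕ) p ≠ 0) :
    degree ℓ Γ j0 m = degree ℓ Γ j0 (lowerExp p m) + eps F ℓ p := by
  simp only [degree, AddMonoidHom.add_apply, AddMonoidHom.finsetSum_apply, expCoord_lowerExp hm,
    gammaCoord_lowerExp, Finset.sum_sub_distrib, Pi.single_apply, Finset.sum_ite_eq', eps]
  ring

def tDer (p : ℕ) : Derivation F (CAlg F ℓ Γ j0) (CAlg F ℓ Γ j0) :=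
  monomialDerivation (lowerExp p) (expCoord p) fun _ m' h => lowerExp_add h m'

def partialDer (p : ℕ) : Derivation F (CAlg F ℓ Γ j0) (CAlg F ℓ Γ j0) :=
  weightDerivation (gammaCoord p) + tDer p

def degDer : Derivation F (CAlg F ℓ Γ j0) (CAlg F ℓ Γ j0) := weightDerivation (degree ℓ Γ j0)

lemma tDer_apply (p : ℕ) (x : CAlg F ℓ Γ j0) :
    tDer p x = monomialMap (lowerExp p) (expCoord p) x := rfl

lemma partialDer_apply (p : ℕ) (x : CAlg F ℓ Γ j0) :
    partialDer p x = monomialMap id (gammaCoord p) x + monomialMap (lowerExp p) (expCoord p) x :=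
  rfl

lemma degDer_apply (x : CAlg F ℓ Γ j0) : degDer x = monomialMap id (degree ℓ Γ j0) x := rfl

lemma partialDer_comm (p q : ℕ) (x : CAlg F ℓ Γ j0) :
    partialDer p (partialDer q x) = partialDer q (partialDer p x) := by
  have hγγ := monomialMap_comm (R := F) (M := BasisIdx ℓ Γ j0) (f := id) (f' := id)
    (g := gammaCoord p) (g' := gammaCoord q) (fun _ => rfl) (fun _ => mul_comm _ _)
  have hγt := monomialMap_comm (R := F) (M := BasisIdx ℓ Γ j0) (f := id) (f' := lowerExp q)
    (g := gammaCoord p) (g' := expCoord q) (fun _ => rfl) (fun _ => mul_comm _ _)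
  have htγ := monomialMap_comm (R := F) (M := BasisIdx ℓ Γ j0) (f := lowerExp p) (f' := id)
    (g := expCoord p) (g' := gammaCoord q) (fun _ => rfl) (fun _ => mul_comm _ _)
  have htt := monomialMap_comm (R := F) (M := BasisIdx ℓ Γ j0) (f := lowerExp p)
    (f' := lowerExp q) (g := expCoord p) (g' := expCoord q) (lowerExp_comm p q) fun m => by
      rcases eq_or_ne p q with rfl | hpq
      · rfl
      · rw [expCoord_lowerExp_of_ne m hpq, expCoord_lowerExp_of_ne m hpq.symm, mul_comm]
  simp only [partialDer_apply, map_add, hγγ, hγt, htγ, htt]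
  abel

lemma partialDer_degDer (hΓ : ∀ α ∈ Γ, ∀ p ∈ iSet ℓ 6 6 ∪ barSet ℓ (iSet ℓ 4 6), α p = 0)
    (p : ℕ) (x : CAlg F ℓ Γ j0) :
    partialDer p (degDer x) = degDer (partialDer p x) + eps F ℓ p • partialDer p x := by
  have hγ := monomialMap_comm_weight (f := id) (g := gammaCoord p) (degree ℓ Γ j0) (eps F ℓ p)
    fun m hm => by
      have : eps F ℓ p = 0 := if_neg fun hp => hm (hΓ _ m.1.2 p hp)
      rw [this, add_zero]
      rfl
  have ht := monomialMap_comm_weight (f := lowerExp p) (g := expCoord p) (degree ℓ Γ j0)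
    (eps F ℓ p) fun m hm => degree_lowerExp fun h => hm (by simp [h])
  simp only [degDer_apply, partialDer_apply, map_add, hγ, ht, smul_add]
  abel

lemma X_of_mem {α : ℕ → F} {i : ℕ → ℕ} (hα : α ∈ Γ) (hi : i ∈ jIdx ℓ j0) :
    X F ℓ Γ j0 α i = Finsupp.single (⟨α, hα⟩, ⟨i, hi⟩) 1 := by
  rw [X, dif_pos ⟨hα, hi⟩]

lemma X_of_not_mem {α : ℕ → F} (hα : α ∉ Γ) (i : ℕ → ℕ) : X F ℓ Γ j0 α i = 0 := by
  rw [X, dif_neg fun h => hα h.1]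

lemma partialDer_X_zero (q : ℕ) (α : ℕ → F) :
    partialDer q (ofCoeff (X F ℓ Γ j0 α 0)) = α q • ofCoeff (X F ℓ Γ j0 α 0) := by
  by_cases hα : α ∈ Γ
  · simp [X_of_mem hα zero_mem_jIdx, partialDer_apply, smul_single, mul_comm]
  · simp [X_of_not_mem hα]

lemma degDer_X_zero (α : ℕ → F) :
    degDer (ofCoeff (X F ℓ Γ j0 α 0)) =
      (∑ r ∈ jSet ℓ 1 3 ∪ iSet ℓ 4 5, α r) • ofCoeff (X F ℓ Γ j0 α 0) := by
  by_cases hα : α ∈ Γ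
  · simp [X_of_mem hα zero_mem_jIdx, degDer_apply, degree_apply, smul_single, mul_comm]
  · simp [X_of_not_mem hα]

variable (F ℓ Γ j0) in
def contactData (hΓ : ∀ α ∈ Γ, ∀ p ∈ iSet ℓ 6 6 ∪ barSet ℓ (iSet ℓ 4 6), α p = 0) :
    ContactData F (CAlg F ℓ Γ j0) ℕ ℕ where
  d := partialDer
  D := degDer
  ε := eps F ℓ
  S := iSet ℓ 1 6
  a := id
  b := bar ℓ
  o := 0
  w p := ofCoeff (X F ℓ Γ j0 (sgm F ℓ p) 0)
  d_comm := partialDer_comm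
  D_d i u := by rw [partialDer_degDer hΓ, add_sub_cancel_right]
  ε_o := eps_zero
  d_a_w p hp q hq := by rw [id, partialDer_X_zero, sgm_apply_of_mem hp hq, id]
  d_b_w p hp q hq := by rw [partialDer_X_zero, sgm_apply_bar hp hq]
  d_o_w p hp := by rw [partialDer_X_zero, sgm_apply_zero hp, zero_smul]
  D_w p hp := by rw [degDer_X_zero, sum_sgm hp, id]

lemma ofCoeff_mulA (u v : CA F ℓ Γ j0) :
    (ofCoeff (mulA F ℓ Γ j0 u v) : CAlg F ℓ Γ j0) = ofCoeff u * ofCoeff v := by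
  rw [mul_def, mulA, ofCoeff_finsuppSum]
  refine Finsupp.sum_congr fun a _ => ?_
  rw [ofCoeff_finsuppSum]
  refine Finsupp.sum_congr fun b _ => ?_
  rw [X_of_mem (add_mem a.1.2 b.1.2) (add_mem_jIdx a.2.2 b.2.2), Finsupp.smul_single, smul_eq_mul,
    mul_one]
  rfl

lemma ofCoeff_pstar (p : ℕ) (u : CA F ℓ Γ j0) :
    (ofCoeff (pstar F ℓ Γ j0 p u) : CAlg F ℓ Γ j0) =
      monomialMap id (gammaCoord p) (ofCoeff u) := by
  rw [monomialMap_ofCoeff, pstar, ofCoeff_finsuppSum]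
  refine Finsupp.sum_congr fun a _ => ?_
  rw [Finsupp.smul_single, smul_eq_mul, mul_one]
  rfl

lemma ofCoeff_pt (p : ℕ) (u : CA F ℓ Γ j0) :
    (ofCoeff (pt F ℓ Γ j0 p u) : CAlg F ℓ Γ j0) = tDer p (ofCoeff u) := by
  rw [tDer_apply, monomialMap_ofCoeff, pt, ofCoeff_finsuppSum]
  refine Finsupp.sum_congr fun a _ => ?_
  rw [X_of_mem a.1.2 (tsub_mem_jIdx a.2.2 _), Finsupp.smul_single, smul_eq_mul, mul_one]
  rfl

lemma ofCoeff_dd (p : ℕ) (u : CA F ℓ Γ j0) :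
    (ofCoeff (dd F ℓ Γ j0 p u) : CAlg F ℓ Γ j0) = partialDer p (ofCoeff u) := by
  rw [dd, ofCoeff_add, ofCoeff_pstar, ofCoeff_pt]
  rfl

lemma ofCoeff_X_mul_tDer {p : ℕ} (hp : p ∈ iSet ℓ 6 6 ∪ barSet ℓ (iSet ℓ 4 6))
    (x : CAlg F ℓ Γ j0) :
    ofCoeff (X F ℓ Γ j0 0 (Pi.single p 1)) * tDer p x = monomialMap id (expCoord p) x := by
  rw [X_of_mem (zero_mem Γ) (single_mem_jIdx hp), ofCoeff_single]
  induction x using induction_linear with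
  | zero => simp
  | add x y hx hy => rw [map_add, mul_add, hx, hy, map_add]
  | single m c =>
    rw [tDer_apply, monomialMap_single, monomialMap_single, single_mul_single, one_mul]
    by_cases hm : (m.2 : ℕ → ℕ) p = 0
    · simp [hm]
    · congr 1
      refine Prod.ext (zero_add _) (Subtype.ext (funext fun r => ?_))
      show (Pi.single p 1 : ℕ → ℕ) r + ((m.2 : ℕ → ℕ) r - (Pi.single p 1 : ℕ → ℕ) r) =
        (m.2 : ℕ → ℕ) r
      rcases eq_or_ne r p with rfl | hr
      · rw [Pi.single_eq_same]; omega
      · rw [Pi.single_eq_of_ne hr]; omega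

lemma ofCoeff_Dop (u : CA F ℓ Γ j0) :
    (ofCoeff (Dop F ℓ Γ j0 u) : CAlg F ℓ Γ j0) = degDer (ofCoeff u) := by
  have hdeg : ⇑(degree ℓ Γ j0) =
      ∑ r ∈ jSet ℓ 1 3 ∪ iSet ℓ 4 5, ⇑(gammaCoord r) +
        ∑ r ∈ iSet ℓ 6 6 ∪ barSet ℓ (iSet ℓ 4 6), ⇑(expCoord (ℓ := ℓ) (Γ := Γ) (j0 := j0) r) := by
    ext m
    simp [degree_apply]
  rw [degDer_apply, hdeg, monomialMap_add, monomialMap_finsetSum, monomialMap_finsetSum, Dop,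
    ofCoeff_add, ofCoeff_sum, ofCoeff_sum]
  congr 1
  · exact Finset.sum_congr rfl fun r _ => ofCoeff_pstar r u
  · refine Finset.sum_congr rfl fun r hr => ?_
    rw [ofCoeff_mulA, ofCoeff_pt, ofCoeff_X_mul_tDer hr]

lemma ofCoeff_brk (hΓ : ∀ α ∈ Γ, ∀ p ∈ iSet ℓ 6 6 ∪ barSet ℓ (iSet ℓ 4 6), α p = 0)
    (u v : CA F ℓ Γ j0) :
    (ofCoeff (brk F ℓ Γ j0 u v) : CAlg F ℓ Γ j0) =
      (contactData F ℓ Γ j0 hΓ).bracket (ofCoeff u) (ofCoeff v) := by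
  rw [brk, add_sub_assoc]
  simp only [ofCoeff_add, ofCoeff_sub, ofCoeff_sum, ofCoeff_mulA, ofCoeff_dd, ofCoeff_Dop, two_smul]
  simp only [ContactData.bracket, ContactData.poisson, ContactData.reeb, ContactData.pair,
    ContactData.twoSubD, two_mul]
  rfl

theorem contact_bracket_skewSymm_and_jacobi_general
    {F : Type*} [Field F] (ℓ : ℕ → ℕ) (Γ : AddSubgroup (ℕ → F)) (j0 : Bool)
    (hΓ2 : ∀ α ∈ Γ, ∀ p ∈ iSet ℓ 6 6 ∪ barSet ℓ (iSet ℓ 4 6), α p = 0) :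
    (∀ u v : CA F ℓ Γ j0, brk F ℓ Γ j0 u v = -brk F ℓ Γ j0 v u) ∧
    (∀ u v w : CA F ℓ Γ j0,
      brk F ℓ Γ j0 (brk F ℓ Γ j0 u v) w + brk F ℓ Γ j0 (brk F ℓ Γ j0 v w) u +
        brk F ℓ Γ j0 (brk F ℓ Γ j0 w u) v = 0) := by
  refine ⟨fun u v => ofCoeff_injective ?_, fun u v w => ofCoeff_injective ?_⟩
  · rw [ofCoeff_neg, ofCoeff_brk hΓ2, ofCoeff_brk hΓ2]
    exact (contactData F ℓ Γ j0 hΓ2).bracket_swap _ _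
  · simp only [ofCoeff_add, ofCoeff_zero, ofCoeff_brk hΓ2]
    exact (contactData F ℓ Γ j0 hΓ2).bracket_jacobi _ _ _

/-- The contact bracket (2.18) on `𝒜` is skew-symmetric and satisfies the
Jacobi identity; hence `(𝒜, [·,·])` is a Lie algebra: the contact Lie algebra
`𝒦 = 𝒦(ℓ⃗,σ,Γ,𝒥)` in normalized form. -/
theorem contact_bracket_skewSymm_and_jacobi
    {F : Type*} [Field F] [CharZero F] (ℓ : ℕ → ℕ) (Γ : AddSubgroup (ℕ → F)) (j0 : Bool)
    (hℓ : 0 < iot ℓ 6)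
    (hΓ1 : ∀ p ∈ jSet ℓ 1 3 ∪ iSet ℓ 4 5, (Pi.single p (1 : F) : ℕ → F) ∈ Γ)
    (hΓ2 : ∀ α ∈ Γ, ∀ p ∈ iSet ℓ 6 6 ∪ barSet ℓ (iSet ℓ 4 6), α p = 0)
    (hΓ3 : ∀ α ∈ Γ, ∀ p, 2 * iot ℓ 6 < p → α p = 0)
    (hΓ0 : (∃ α ∈ Γ, α 0 ≠ 0) → (Pi.single 0 (1 : F) : ℕ → F) ∈ Γ)
    (hJ0 : j0 = false → ∃ α ∈ Γ, α 0 ≠ 0) :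
    (∀ u v : CA F ℓ Γ j0, brk F ℓ Γ j0 u v = -brk F ℓ Γ j0 v u) ∧
    (∀ u v w : CA F ℓ Γ j0,
      brk F ℓ Γ j0 (brk F ℓ Γ j0 u v) w + brk F ℓ Γ j0 (brk F ℓ Γ j0 v w) u +
        brk F ℓ Γ j0 (brk F ℓ Γ j0 w u) v = 0) :=
  contact_bracket_skewSymm_and_jacobi_general ℓ Γ j0 hΓ2

end
end

section
/- For every additive group homomorphism μ:Γ→F with μ(σ_p)=0 for all p∈I_{1,5}, the linear map d_μ:𝒦→𝒦 defined on the basis by d_μ(x^{α,i⃗})=μ(α)x^{α,i⃗} is a derivation of the Lie algebra 𝒦. -/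
noncomputable section

variable (F : Type*) [Field F] (ℓ : ℕ → ℕ) (Γ : AddSubgroup (ℕ → F)) (j0 : Bool)

/-- For a function `μ : Γ → F`, the diagonal linear map `d_μ : x^{α,i⃗} ↦ μ(α)x^{α,i⃗}`. -/
def dmu (μ : ↥Γ → F) (u : CA F ℓ Γ j0) : CA F ℓ Γ j0 :=
  u.sum fun a ca => (ca * μ a.1) • Finsupp.single a 1

/-!
`d_μ` is diagonal on the monomial basis `x^{α,i⃗}`, so it commutes with `∂*_p` and `∂_{t_p}`,
which do not change the `Γ`-degree `α`; as `μ` is additive, it is a derivation of the product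
`x^{α,i⃗} x^{β,j⃗} = x^{α+β,i⃗+j⃗}`. The bracket is assembled from these operators, the product,
and the coefficients `x^{σ_p}` and `t_p`, which `d_μ` kills: `μ(σ_p) = 0` for `p ∈ I_{1,5}`,
`σ_p = 0` for `p ∈ I₆`, and `t_p` has degree `0`. Any linear map with these properties is a
derivation of the bracket.
-/

lemma Finsupp.sum_mul_smul_eq_linearCombination {α R M : Type*} [CommSemiring R]
    [AddCommMonoid M] [Module R M] (r : α → R) (g : α → M) (u : α →₀ R) :
    (u.sum fun a c => (c * r a) • g a) = Finsupp.linearCombination R (fun a => r a • g a) u := by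
  simp only [Finsupp.linearCombination_apply, smul_smul]

section Derivation

variable {F ℓ Γ j0}

def dmuL (μ : ↥Γ → F) : CA F ℓ Γ j0 →ₗ[F] CA F ℓ Γ j0 :=
  Finsupp.linearCombination F fun a => μ a.1 • Finsupp.single a 1

def pstarL (p : ℕ) : CA F ℓ Γ j0 →ₗ[F] CA F ℓ Γ j0 :=
  Finsupp.linearCombination F fun a => a.1.1 p • Finsupp.single a 1

def ptL (p : ℕ) : CA F ℓ Γ j0 →ₗ[F] CA F ℓ Γ j0 :=
  Finsupp.linearCombination F fun a =>
    (a.2.1 p : F) • X F ℓ Γ j0 a.1.1 (a.2.1 - Pi.single p 1)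

def mulAL : CA F ℓ Γ j0 →ₗ[F] CA F ℓ Γ j0 →ₗ[F] CA F ℓ Γ j0 :=
  Finsupp.linearCombination F fun a =>
    Finsupp.linearCombination F fun b => X F ℓ Γ j0 (a.1.1 + b.1.1) (a.2.1 + b.2.1)

lemma dmu_eq_dmuL (μ : ↥Γ → F) (u : CA F ℓ Γ j0) : dmu F ℓ Γ j0 μ u = dmuL μ u :=
  Finsupp.sum_mul_smul_eq_linearCombination _ _ u

lemma pstar_eq_pstarL (p : ℕ) (u : CA F ℓ Γ j0) : pstar F ℓ Γ j0 p u = pstarL p u :=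
  Finsupp.sum_mul_smul_eq_linearCombination _ _ u

lemma pt_eq_ptL (p : ℕ) (u : CA F ℓ Γ j0) : pt F ℓ Γ j0 p u = ptL p u :=
  Finsupp.sum_mul_smul_eq_linearCombination _ _ u

lemma mulA_eq_mulAL (u v : CA F ℓ Γ j0) : mulA F ℓ Γ j0 u v = mulAL u v := by
  simp only [mulA, mulAL, Finsupp.linearCombination_apply, LinearMap.finsupp_sum_apply,
    LinearMap.smul_apply, Finsupp.smul_sum, smul_smul]

lemma dd_eq (p : ℕ) (u : CA F ℓ Γ j0) : dd F ℓ Γ j0 p u = pstarL p u + ptL p u := by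
  rw [dd, pstar_eq_pstarL, pt_eq_ptL]

lemma dmuL_single (μ : ↥Γ → F) (a : ↥Γ × ↥(jIdx ℓ j0)) (c : F) :
    dmuL μ (Finsupp.single a c) = (c * μ a.1) • Finsupp.single a 1 := by
  rw [dmuL, Finsupp.linearCombination_single, smul_smul]

lemma pstarL_single (p : ℕ) (a : ↥Γ × ↥(jIdx ℓ j0)) (c : F) :
    pstarL p (Finsupp.single a c) = (c * a.1.1 p) • Finsupp.single a 1 := by
  rw [pstarL, Finsupp.linearCombination_single, smul_smul]

lemma ptL_single (p : ℕ) (a : ↥Γ × ↥(jIdx ℓ j0)) (c : F) :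
    ptL p (Finsupp.single a c) =
      (c * (a.2.1 p : F)) • X F ℓ Γ j0 a.1.1 (a.2.1 - Pi.single p 1) := by
  rw [ptL, Finsupp.linearCombination_single, smul_smul]

lemma mulAL_single_single (a b : ↥Γ × ↥(jIdx ℓ j0)) (c d : F) :
    mulAL (Finsupp.single a c) (Finsupp.single b d) =
      (c * d) • X F ℓ Γ j0 (a.1.1 + b.1.1) (a.2.1 + b.2.1) := by
  rw [mulAL, Finsupp.linearCombination_single, LinearMap.smul_apply,
    Finsupp.linearCombination_single, smul_smul]

lemma dmuL_X (μ : ↥Γ → F) (γ : ↥Γ) (i : ℕ → ℕ) :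
    dmuL μ (X F ℓ Γ j0 γ i) = μ γ • X F ℓ Γ j0 γ i := by
  unfold X
  split_ifs with h
  · rw [dmuL_single, one_mul]
  · rw [map_zero, smul_zero]

lemma dmuL_X_eq_zero (μ : ↥Γ → F) {α : ℕ → F} (hμ : ∀ h : α ∈ Γ, μ ⟨α, h⟩ = 0)
    (i : ℕ → ℕ) : dmuL μ (X F ℓ Γ j0 α i) = 0 := by
  by_cases h : α ∈ Γ
  · rw [show α = ((⟨α, h⟩ : ↥Γ) : ℕ → F) from rfl, dmuL_X, hμ h, zero_smul]
  · rw [X, dif_neg (fun h' => h h'.1), map_zero]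

lemma dmuL_pstarL (μ : ↥Γ → F) (p : ℕ) (u : CA F ℓ Γ j0) :
    dmuL μ (pstarL p u) = pstarL p (dmuL μ u) := by
  suffices h : dmuL μ ∘ₗ pstarL p = pstarL p ∘ₗ dmuL μ from LinearMap.congr_fun h u
  refine Finsupp.lhom_ext fun a c => ?_
  simp only [LinearMap.comp_apply, pstarL_single, dmuL_single, map_smul, smul_smul]
  ring_nf

lemma dmuL_ptL (μ : ↥Γ → F) (p : ℕ) (u : CA F ℓ Γ j0) :
    dmuL μ (ptL p u) = ptL p (dmuL μ u) := by
  suffices h : dmuL μ ∘ₗ ptL p = ptL p ∘ₗ dmuL μ from LinearMap.congr_fun h u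
  refine Finsupp.lhom_ext fun a c => ?_
  simp only [LinearMap.comp_apply, ptL_single, dmuL_single, map_smul, dmuL_X, smul_smul]
  ring_nf

lemma dmuL_dd (μ : ↥Γ → F) (p : ℕ) (u : CA F ℓ Γ j0) :
    dmuL μ (dd F ℓ Γ j0 p u) = dd F ℓ Γ j0 p (dmuL μ u) := by
  rw [dd_eq, dd_eq, map_add, dmuL_pstarL, dmuL_ptL]

lemma dmuL_mulAL (μ : ↥Γ →+ F) (u v : CA F ℓ Γ j0) :
    dmuL μ (mulAL u v) = mulAL (dmuL μ u) v + mulAL u (dmuL μ v) := by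
  suffices h : mulAL.compr₂ (dmuL μ) = mulAL ∘ₗ dmuL μ + mulAL.compl₂ (dmuL μ) from
    LinearMap.congr_fun₂ h u v
  refine Finsupp.lhom_ext fun a c => Finsupp.lhom_ext fun b d => ?_
  have hX := dmuL_X (ℓ := ℓ) (j0 := j0) μ (a.1 + b.1) (a.2.1 + b.2.1)
  simp only [AddSubgroup.coe_add, map_add] at hX
  simp only [LinearMap.compr₂_apply, LinearMap.add_apply, LinearMap.comp_apply,
    LinearMap.compl₂_apply, mulAL_single_single, dmuL_single, map_smul, LinearMap.smul_apply,
    hX, smul_smul, ← add_smul]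
  ring_nf

lemma dmuL_Dop (μ : ↥Γ →+ F) (u : CA F ℓ Γ j0) :
    dmuL μ (Dop F ℓ Γ j0 u) = Dop F ℓ Γ j0 (dmuL μ u) := by
  have ht : ∀ p, dmuL (ℓ := ℓ) (j0 := j0) μ (X F ℓ Γ j0 0 (Pi.single p 1)) = 0 :=
    fun p => dmuL_X_eq_zero _ (fun _ => μ.map_zero) _
  simp only [Dop, map_add, map_sum, mulA_eq_mulAL, dmuL_mulAL, ht, pstar_eq_pstarL, pt_eq_ptL,
    dmuL_pstarL, dmuL_ptL, map_zero, LinearMap.zero_apply, zero_add]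

lemma iot_mono_s1 {i j : ℕ} (hij : i ≤ j) : iot ℓ i ≤ iot ℓ j :=
  Finset.sum_le_sum_of_subset (Finset.Icc_subset_Icc_right hij)

lemma sgm_eq_zero_of_iot_five_lt {p : ℕ} (h5 : iot ℓ 5 < p) (h6 : p ≤ iot ℓ 6) :
    sgm F ℓ p = 0 := by
  have h3 : iot ℓ 3 < p := (iot_mono_s1 (by norm_num)).trans_lt h5
  simp [sgm, h6, iSet, Finset.mem_Icc, h5.not_ge, h3.not_ge]

lemma map_sgm_eq_zero (μ : ↥Γ →+ F)
    (hμσ : ∀ p ∈ iSet ℓ 1 5, ∀ h : sgm F ℓ p ∈ Γ, μ ⟨sgm F ℓ p, h⟩ = 0)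
    {p : ℕ} (hp : p ∈ iSet ℓ 1 6) (h : sgm F ℓ p ∈ Γ) : μ ⟨sgm F ℓ p, h⟩ = 0 := by
  by_cases hp5 : p ∈ iSet ℓ 1 5
  · exact hμσ p hp5 h
  · rw [iSet, Finset.mem_Icc] at hp hp5
    have hσ : sgm F ℓ p = 0 := sgm_eq_zero_of_iot_five_lt (by omega) hp.2
    have h0 : (⟨sgm F ℓ p, h⟩ : ↥Γ) = 0 := Subtype.ext hσ
    rw [h0, map_zero]

lemma map_brk_of_derivation (D : CA F ℓ Γ j0 →ₗ[F] CA F ℓ Γ j0)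
    (hmul : ∀ u v, D (mulAL u v) = mulAL (D u) v + mulAL u (D v))
    (hdd : ∀ p u, D (dd F ℓ Γ j0 p u) = dd F ℓ Γ j0 p (D u))
    (hDop : ∀ u, D (Dop F ℓ Γ j0 u) = Dop F ℓ Γ j0 (D u))
    (hsgm : ∀ p ∈ iSet ℓ 1 6, D (X F ℓ Γ j0 (sgm F ℓ p) 0) = 0) (u v : CA F ℓ Γ j0) :
    D (brk F ℓ Γ j0 u v) = brk F ℓ Γ j0 (D u) v + brk F ℓ Γ j0 u (D v) := by
  simp only [brk, mulA_eq_mulAL, map_add, map_sub, map_sum, hmul]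
  rw [Finset.sum_congr rfl fun p hp => by rw [hsgm p hp]]
  simp only [map_sub, map_smul, map_zero, hmul, hdd, hDop, LinearMap.zero_apply, zero_add,
    LinearMap.sub_apply, LinearMap.smul_apply, Finset.sum_add_distrib,
    Finset.sum_sub_distrib, smul_add]
  abel

end Derivation

theorem dmu_is_derivation_general
    {F : Type*} [Field F] (ℓ : ℕ → ℕ) (Γ : AddSubgroup (ℕ → F)) (j0 : Bool)
    (μ : ↥Γ →+ F)
    (hμσ : ∀ p ∈ iSet ℓ 1 5, ∀ h : sgm F ℓ p ∈ Γ, μ ⟨sgm F ℓ p, h⟩ = 0) :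
    ∀ u v : CA F ℓ Γ j0,
      dmu F ℓ Γ j0 (⇑μ) (brk F ℓ Γ j0 u v) =
        brk F ℓ Γ j0 (dmu F ℓ Γ j0 (⇑μ) u) v + brk F ℓ Γ j0 u (dmu F ℓ Γ j0 (⇑μ) v) := by
  intro u v
  simp only [dmu_eq_dmuL]
  exact map_brk_of_derivation (dmuL μ) (dmuL_mulAL μ) (dmuL_dd μ) (dmuL_Dop μ)
    (fun p hp => dmuL_X_eq_zero μ (map_sgm_eq_zero μ hμσ hp) 0) u v

/-- For every additive group homomorphism `μ : Γ → F` with `μ(σ_p) = 0` for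
all `p ∈ I_{1,5}`, the linear map `d_μ` defined on the basis by
`d_μ(x^{α,i⃗}) = μ(α)x^{α,i⃗}` is a derivation of the contact Lie algebra `𝒦`. -/
theorem dmu_is_derivation
    {F : Type*} [Field F] [CharZero F] (ℓ : ℕ → ℕ) (Γ : AddSubgroup (ℕ → F)) (j0 : Bool)
    (hℓ : 0 < iot ℓ 6)
    (hΓ1 : ∀ p ∈ jSet ℓ 1 3 ∪ iSet ℓ 4 5, (Pi.single p (1 : F) : ℕ → F) ∈ Γ)
    (hΓ2 : ∀ α ∈ Γ, ∀ p ∈ iSet ℓ 6 6 ∪ barSet ℓ (iSet ℓ 4 6), α p = 0)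
    (hΓ3 : ∀ α ∈ Γ, ∀ p, 2 * iot ℓ 6 < p → α p = 0)
    (hΓ0 : (∃ α ∈ Γ, α 0 ≠ 0) → (Pi.single 0 (1 : F) : ℕ → F) ∈ Γ)
    (hJ0 : j0 = false → ∃ α ∈ Γ, α 0 ≠ 0)
    (μ : ↥Γ →+ F)
    (hμσ : ∀ p ∈ iSet ℓ 1 5, ∀ h : sgm F ℓ p ∈ Γ, μ ⟨sgm F ℓ p, h⟩ = 0) :
    ∀ u v : CA F ℓ Γ j0,
      dmu F ℓ Γ j0 (⇑μ) (brk F ℓ Γ j0 u v) =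
        brk F ℓ Γ j0 (dmu F ℓ Γ j0 (⇑μ) u) v + brk F ℓ Γ j0 u (dmu F ℓ Γ j0 (⇑μ) v) :=
  dmu_is_derivation_general ℓ Γ j0 μ hμσ

end
end
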